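/- arXiv:1209.4159 — 5 statements merged into one kernel-verified Lean document; each statement's English description precedes it below -/
import Mathlib

section
/- For all integers k ≥ 2 and n ≥ m ≥ 1, the Ramsey number of k-uniform loose paths satisfies R(P^k_n, P^k_m) ≥ (k−1)n + ⌊(m+1)/2⌋; concretely, there is a red/blue coloring of all k-element subsets of a vertex set of size (k−1)n + ⌊(m+1)/2⌋ − 1 with no red copy of P^k_n and no blue copy of P^k_m (namely: partition the vertices into A of size (k−1)n and B of size ⌊(m+1)/2⌋ − 1, color blue every k-set meeting B and red all others). -/
/-!
Colour a `k`-set red iff it lies in the first `(k-1)n` vertices. A red loose path of length `n`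
would place its `(k-1)n + 1` distinct vertices among these `(k-1)n` vertices. In a blue loose path
of length `m` every edge meets the remaining set `B`, and the edges with indices `0, 2, 4, …` are
pairwise disjoint, so `B` needs at least `⌈m/2⌉ = ⌊(m+1)/2⌋` vertices.
-/

/-- The set of vertex *indices* of the `i`-th edge of a `k`-uniform loose path/cycle:
the indices `i*(k-1), …, i*(k-1) + (k-1)` (consecutive edges overlap in one index). -/
def looseEdgeIdx (k i : ℕ) : Finset ℕ := Finset.Icc (i * (k - 1)) (i * (k - 1) + (k - 1))

/-- `v` is (the vertex map of) a copy of the `k`-uniform loose path of length `n`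
(vertex indices `0, …, n*(k-1)`) all of whose edges receive color `c` under the
coloring `col` of the `k`-subsets of `V`. -/
def IsLoosePathCopy {V : Type} [DecidableEq V] (k : ℕ) (col : Finset V → Bool) (c : Bool)
    (n : ℕ) (v : ℕ → V) : Prop :=
  Set.InjOn v (Set.Iio (n * (k - 1) + 1)) ∧
    ∀ i < n, col ((looseEdgeIdx k i).image v) = c

/-- The coloring `col` contains a copy of the `k`-uniform loose path of length `n`
in color `c`. -/
def HasLoosePath {V : Type} [DecidableEq V] (k : ℕ) (col : Finset V → Bool) (c : Bool)
    (n : ℕ) : Prop :=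
  ∃ v : ℕ → V, IsLoosePathCopy k col c n v

/-- `v` is (the vertex map of) a copy of the `k`-uniform loose cycle of length `n`
(vertex indices `0, …, n*(k-1) - 1`, taken modulo `n*(k-1)`) all of whose edges
receive color `c` under the coloring `col`. -/
def IsLooseCycleCopy {V : Type} [DecidableEq V] (k : ℕ) (col : Finset V → Bool) (c : Bool)
    (n : ℕ) (v : ℕ → V) : Prop :=
  Set.InjOn v (Set.Iio (n * (k - 1))) ∧
    ∀ i < n, col ((looseEdgeIdx k i).image (fun j => v (j % (n * (k - 1))))) = c

/-- The coloring `col` contains a copy of the `k`-uniform loose cycle of length `n`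
in color `c`. -/
def HasLooseCycle {V : Type} [DecidableEq V] (k : ℕ) (col : Finset V → Bool) (c : Bool)
    (n : ℕ) : Prop :=
  ∃ v : ℕ → V, IsLooseCycleCopy k col c n v

open Finset

def prefixColoring (N M : ℕ) (S : Finset (Fin N)) : Bool :=
  decide (∀ x ∈ S, (x : ℕ) < M)

lemma mem_looseEdgeIdx {k i j : ℕ} :
    j ∈ looseEdgeIdx k i ↔ i * (k - 1) ≤ j ∧ j ≤ i * (k - 1) + (k - 1) :=
  Finset.mem_Icc

lemma le_of_mem_looseEdgeIdx {k i j n : ℕ} (hj : j ∈ looseEdgeIdx k i) (hi : i < n) :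
    j ≤ n * (k - 1) := by
  rw [mem_looseEdgeIdx] at hj
  have : (i + 1) * (k - 1) ≤ n * (k - 1) := Nat.mul_le_mul_right _ hi
  rw [Nat.succ_mul] at this
  omega

lemma exists_mem_looseEdgeIdx {k j n : ℕ} (hn : 0 < n) (hj : j ≤ n * (k - 1)) :
    ∃ i < n, j ∈ looseEdgeIdx k i := by
  by_cases hlast : j < n * (k - 1)
  · have hk : 0 < k - 1 := Nat.pos_of_ne_zero fun h => by simp [h] at hlast
    refine ⟨j / (k - 1), Nat.div_lt_of_lt_mul (by rwa [mul_comm] at hlast), ?_⟩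
    rw [mem_looseEdgeIdx]
    have := Nat.div_add_mod' j (k - 1)
    have := Nat.mod_lt j hk
    omega
  · refine ⟨n - 1, by omega, ?_⟩
    have : (n - 1 + 1) * (k - 1) = n * (k - 1) := by rw [Nat.sub_add_cancel hn]
    rw [Nat.succ_mul] at this
    rw [mem_looseEdgeIdx]
    omega

lemma disjoint_looseEdgeIdx {k a b : ℕ} (hk : 2 ≤ k) (hab : a + 2 ≤ b) :
    Disjoint (looseEdgeIdx k a) (looseEdgeIdx k b) := by
  rw [Finset.disjoint_left]
  intro j ha hb
  rw [mem_looseEdgeIdx] at ha hb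
  have : (a + 2) * (k - 1) ≤ b * (k - 1) := Nat.mul_le_mul_right _ hab
  rw [add_mul] at this
  omega

section LoosePath

variable {V : Type} {k n : ℕ} {v : ℕ → V}

lemma add_one_le_card_of_forall_mem (hv : Set.InjOn v (Set.Iio (n * (k - 1) + 1)))
    {A : Finset V} (hA : ∀ j ≤ n * (k - 1), v j ∈ A) : n * (k - 1) + 1 ≤ #A := by
  simpa using card_le_card_of_injOn v (s := range (n * (k - 1) + 1))
    (fun j hj => hA j (Nat.lt_succ_iff.mp (mem_range.mp hj)))
    (by simpa only [coe_range] using hv)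

lemma half_le_card_of_forall_edge_meets (hk : 2 ≤ k)
    (hv : Set.InjOn v (Set.Iio (n * (k - 1) + 1))) {B : Finset V}
    (hB : ∀ i < n, ∃ j ∈ looseEdgeIdx k i, v j ∈ B) : (n + 1) / 2 ≤ #B := by
  have hEven : ∀ i < (n + 1) / 2, ∃ j ∈ looseEdgeIdx k (2 * i), v j ∈ B :=
    fun i hi => hB (2 * i) (by omega)
  choose! g hg_mem hg_B using hEven
  have hg_le : ∀ i < (n + 1) / 2, g i < n * (k - 1) + 1 :=
    fun i hi => Nat.lt_succ_of_le (le_of_mem_looseEdgeIdx (hg_mem i hi) (by omega))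
  have hg_inj : ∀ i < (n + 1) / 2, ∀ i' < (n + 1) / 2, g i = g i' → i = i' := by
    intro i hi i' hi' hgg
    by_contra hne
    rcases Nat.lt_or_gt_of_ne hne with hlt | hlt
    · exact Finset.disjoint_left.mp (disjoint_looseEdgeIdx hk (by omega : 2 * i + 2 ≤ 2 * i'))
        (hg_mem i hi) (hgg ▸ hg_mem i' hi')
    · exact Finset.disjoint_left.mp (disjoint_looseEdgeIdx hk (by omega : 2 * i' + 2 ≤ 2 * i))
        (hg_mem i' hi') (hgg ▸ hg_mem i hi)
  simpa using card_le_card_of_injOn (fun i => v (g i)) (s := range ((n + 1) / 2))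
    (fun i hi => hg_B i (mem_range.mp hi))
    (fun i hi i' hi' h => hg_inj i (mem_range.mp hi) i' (mem_range.mp hi')
      (hv (hg_le i (mem_range.mp hi)) (hg_le i' (mem_range.mp hi')) h))

end LoosePath

lemma card_filter_le_val {N M : ℕ} : #{x : Fin N | M ≤ (x : ℕ)} = N - M := by
  have := card_filter_add_card_filter_not (s := (univ : Finset (Fin N)))
    (fun x : Fin N => (x : ℕ) < M)
  simp only [not_lt, Fin.card_filter_val_lt, card_univ, Fintype.card_fin] at this
  omega

lemma not_hasLoosePath_prefixColoring_true {N k n : ℕ} (hn : 0 < n) :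
    ¬ HasLoosePath k (prefixColoring N ((k - 1) * n)) true n := by
  rintro ⟨v, hv, hred⟩
  have hA : ∀ j ≤ n * (k - 1), v j ∈ ({x : Fin N | (x : ℕ) < (k - 1) * n} : Finset _) := by
    intro j hj
    obtain ⟨i, hi, hji⟩ := exists_mem_looseEdgeIdx hn hj
    have := hred i hi
    simp only [prefixColoring, decide_eq_true_eq] at this
    simpa using this (v j) (mem_image_of_mem v hji)
  have := add_one_le_card_of_forall_mem hv hA
  rw [Fin.card_filter_val_lt, mul_comm] at this
  omega

lemma not_hasLoosePath_prefixColoring_false {N M k m : ℕ} (hk : 2 ≤ k)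
    (hN : N - M < (m + 1) / 2) : ¬ HasLoosePath k (prefixColoring N M) false m := by
  rintro ⟨v, hv, hblue⟩
  have hB : ∀ i < m, ∃ j ∈ looseEdgeIdx k i,
      v j ∈ ({x : Fin N | M ≤ (x : ℕ)} : Finset _) := by
    intro i hi
    have := hblue i hi
    simp only [prefixColoring, decide_eq_false_iff_not, not_forall, not_lt, exists_prop,
      mem_image] at this
    obtain ⟨_, ⟨j, hj, rfl⟩, hM⟩ := this
    exact ⟨j, hj, by simpa using hM⟩
  have := half_le_card_of_forall_edge_meets hk hv hB
  rw [card_filter_le_val] at this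
  omega

/-- For `k ≥ 2` and `n ≥ m ≥ 1`,
`R(P^k_n, P^k_m) ≥ (k−1)n + ⌊(m+1)/2⌋`.  Concretely, on a vertex set of size
`(k−1)n + ⌊(m+1)/2⌋ − 1` the coloring which colors a `k`-set red (`true`) iff it
is contained in the first `(k−1)n` vertices (i.e. blue iff it meets the set `B`
of the last `⌊(m+1)/2⌋ − 1` vertices) has no red copy of `P^k_n` and no blue copy
of `P^k_m`; and consequently every `N` for which all colorings contain a red
`P^k_n` or a blue `P^k_m` satisfies `N ≥ (k−1)n + ⌊(m+1)/2⌋`. -/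
theorem loose_path_ramsey_lower_bound (k m n : ℕ) (hk : 2 ≤ k) (hm : 1 ≤ m)
    (hmn : m ≤ n) :
    (¬ HasLoosePath k
        (fun S : Finset (Fin ((k - 1) * n + (m + 1) / 2 - 1)) =>
          decide (∀ x ∈ S, (x : ℕ) < (k - 1) * n)) true n ∧
      ¬ HasLoosePath k
        (fun S : Finset (Fin ((k - 1) * n + (m + 1) / 2 - 1)) =>
          decide (∀ x ∈ S, (x : ℕ) < (k - 1) * n)) false m) ∧
    ∀ N : ℕ, (∀ col : Finset (Fin N) → Bool,
        HasLoosePath k col true n ∨ HasLoosePath k col false m) →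
      (k - 1) * n + (m + 1) / 2 ≤ N := by
  have hn : 0 < n := by omega
  refine ⟨⟨not_hasLoosePath_prefixColoring_true hn,
    not_hasLoosePath_prefixColoring_false hk (by omega)⟩, fun N hRamsey => ?_⟩
  by_contra! hN
  rcases hRamsey (prefixColoring N ((k - 1) * n)) with hred | hblue
  · exact not_hasLoosePath_prefixColoring_true hn hred
  · exact not_hasLoosePath_prefixColoring_false hk (by omega) hblue
end

section
/- For all integers k ≥ 2 and n ≥ m ≥ 3, the Ramsey number of a k-uniform loose path versus a k-uniform loose cycle satisfies R(P^k_n, C^k_m) ≥ (k−1)n + ⌊(m+1)/2⌋. -/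
open Finset

def insideColoring {V : Type} [DecidableEq V] (A : Finset V) (s : Finset V) : Bool :=
  decide (s ⊆ A)

theorem exists_lt_mem_looseEdgeIdx {k n j : ℕ} (hn : 0 < n) (hj : j ≤ n * (k - 1)) :
    ∃ i < n, j ∈ looseEdgeIdx k i := by
  simp only [looseEdgeIdx, mem_Icc]
  rcases hj.lt_or_eq with hlt | rfl
  · have hK : 0 < k - 1 := Nat.pos_of_ne_zero fun h => by simp [h] at hlt
    exact ⟨j / (k - 1), (Nat.div_lt_iff_lt_mul hK).2 hlt, Nat.div_mul_le_self j (k - 1),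
      (Nat.lt_div_mul_add hK).le⟩
  · refine ⟨n - 1, by omega, Nat.mul_le_mul_right _ (by omega), ?_⟩
    rw [← Nat.succ_mul, Nat.succ_eq_add_one, Nat.sub_add_cancel hn]

theorem HasLoosePath.mul_lt_card_of_insideColoring {V : Type} [DecidableEq V] {k n : ℕ}
    {A : Finset V} (hn : 0 < n) (h : HasLoosePath k (insideColoring A) true n) :
    n * (k - 1) < #A := by
  obtain ⟨v, hinj, hedge⟩ := h
  have hsub : (range (n * (k - 1) + 1)).image v ⊆ A := by
    intro x hx
    obtain ⟨j, hj, rfl⟩ := mem_image.1 hx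
    obtain ⟨i, hi, hji⟩ := exists_lt_mem_looseEdgeIdx hn (Nat.lt_succ_iff.1 (mem_range.1 hj))
    exact of_decide_eq_true (hedge i hi) (mem_image_of_mem v hji)
  calc n * (k - 1) < #((range (n * (k - 1) + 1)).image v) := by
        rw [card_image_of_injOn (by simpa using hinj), card_range]; omega
    _ ≤ #A := card_le_card hsub

/-- At most two indices, among them every edge of `C^k_m` through its vertex `r` (the
wrap-around edge `m - 1` passes through `0`). -/
def looseCycleEdgesAt (k m r : ℕ) : Finset ℕ :=
  {r / (k - 1), if r = 0 then m - 1 else r / (k - 1) - 1}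

theorem card_looseCycleEdgesAt_le_two (k m r : ℕ) : #(looseCycleEdgesAt k m r) ≤ 2 :=
  (card_insert_le _ _).trans (by rw [card_singleton])

theorem mem_looseCycleEdgesAt {k m i j : ℕ} (hk : 2 ≤ k) (hi : i < m)
    (hj : j ∈ looseEdgeIdx k i) : i ∈ looseCycleEdgesAt k m (j % (m * (k - 1))) := by
  have hK : 0 < k - 1 := by omega
  simp only [looseEdgeIdx, mem_Icc] at hj
  have hjm : j ≤ m * (k - 1) :=
    hj.2.trans (by rw [← Nat.succ_mul]; exact Nat.mul_le_mul_right _ hi)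
  simp only [looseCycleEdgesAt, mem_insert, mem_singleton]
  rcases hjm.lt_or_eq with hlt | rfl
  · rw [Nat.mod_eq_of_lt hlt]
    have hlo : i ≤ j / (k - 1) := (Nat.le_div_iff_mul_le hK).2 hj.1
    have hhi : j / (k - 1) ≤ i + 1 := Nat.div_le_of_le_mul (by rw [Nat.mul_comm]; linarith)
    have hzero : j = 0 → i = j / (k - 1) := fun h0 => by
      subst h0; simpa using hlo
    split_ifs <;> omega
  · right
    rw [Nat.mod_self, if_pos rfl]
    have : m ≤ i + 1 := Nat.le_of_mul_le_mul_right (by rw [Nat.succ_mul]; exact hj.2) hK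
    omega

theorem HasLooseCycle.le_two_mul_card_compl_of_insideColoring {V : Type} [Fintype V]
    [DecidableEq V] {k m : ℕ} {A : Finset V} (hk : 2 ≤ k)
    (h : HasLooseCycle k (insideColoring A) false m) : m ≤ 2 * #Aᶜ := by
  obtain ⟨v, hinj, hedge⟩ := h
  have hout : ∀ i < m, ∃ j ∈ looseEdgeIdx k i, v (j % (m * (k - 1))) ∉ A := by
    intro i hi
    have := of_decide_eq_false (hedge i hi)
    simpa [subset_iff] using this
  choose! J hJ hJA using hout
  set f : ℕ → ℕ := fun i => J i % (m * (k - 1))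
  have hfib : ∀ r ∈ (range m).image f, #{i ∈ range m | f i = r} ≤ 2 := fun r _ =>
    (card_le_card fun i hir => by
      obtain ⟨hi, rfl⟩ := mem_filter.1 hir
      exact mem_looseCycleEdgesAt hk (mem_range.1 hi) (hJ i (mem_range.1 hi))).trans
      (card_looseCycleEdgesAt_le_two k m r)
  have hf_lt : ∀ i < m, f i < m * (k - 1) := fun i hi =>
    Nat.mod_lt _ (Nat.mul_pos (by omega) (by omega))
  have hinj' : Set.InjOn v ((range m).image f) := hinj.mono fun r hr => by
    obtain ⟨i, hi, rfl⟩ := mem_image.1 hr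
    exact hf_lt i (mem_range.1 hi)
  have hsub : ((range m).image f).image v ⊆ Aᶜ := fun x hx => by
    obtain ⟨r, hr, rfl⟩ := mem_image.1 hx
    obtain ⟨i, hi, rfl⟩ := mem_image.1 hr
    exact mem_compl.2 (hJA i (mem_range.1 hi))
  calc m = #(range m) := (card_range m).symm
    _ ≤ 2 * #((range m).image f) := card_le_mul_card_image _ 2 hfib
    _ = 2 * #(((range m).image f).image v) := by rw [card_image_of_injOn hinj']
    _ ≤ 2 * #Aᶜ := Nat.mul_le_mul_left 2 (card_le_card hsub)

/-- For `k ≥ 2` and `n ≥ m ≥ 3`, the Ramsey number of the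
`k`-uniform loose path `P^k_n` versus the `k`-uniform loose cycle `C^k_m`
satisfies `R(P^k_n, C^k_m) ≥ (k−1)n + ⌊(m+1)/2⌋`: every `N` such that all
red/blue colorings of the `k`-subsets of an `N`-set contain a red copy of
`P^k_n` or a blue copy of `C^k_m` satisfies `N ≥ (k−1)n + ⌊(m+1)/2⌋`
(red = `true`, blue = `false`). -/
theorem path_cycle_ramsey_lower_bound (k m n : ℕ) (hk : 2 ≤ k) (hm : 3 ≤ m)
    (hmn : m ≤ n) :
    ∀ N : ℕ, (∀ col : Finset (Fin N) → Bool,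
        HasLoosePath k col true n ∨ HasLooseCycle k col false m) →
      (k - 1) * n + (m + 1) / 2 ≤ N := by
  intro N hN
  by_contra! hN_lt
  obtain ⟨A, -, hA⟩ :=
    exists_subset_card_eq (s := (univ : Finset (Fin N))) (n := min N ((k - 1) * n))
      (by simp)
  have hAc : #Aᶜ = N - min N ((k - 1) * n) := by rw [card_compl, Fintype.card_fin, hA]
  rcases hN (insideColoring A) with hpath | hcycle
  · have := hpath.mul_lt_card_of_insideColoring (by omega)
    rw [Nat.mul_comm] at this
    omega
  · have := hcycle.le_two_mul_card_compl_of_insideColoring hk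
    omega
end

section
/- For all integers k ≥ 2 and n ≥ m ≥ 3, the Ramsey number of k-uniform loose cycles satisfies R(C^k_n, C^k_m) ≥ (k−1)n + ⌊(m+1)/2⌋ − 1. -/
/-!
Colour a `k`-set red iff it lies inside a fixed set `A` of `(k-1)n - 1` vertices. A red loose
`n`-cycle has `(k-1)n` vertices, all in `A`, which is too many. Every edge of a blue loose
`m`-cycle meets the complement of `A`, and each vertex lies in at most two edges of a loose
cycle, so the complement has at least `m / 2` vertices; when `N < (k-1)n + ⌊(m+1)/2⌋ - 1`
it has fewer.
-/

open Finset

theorem Nat.eq_pred_div_or_eq_div {d i t : ℕ} (hd : 0 < d) (h₁ : i * d ≤ t)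
    (h₂ : t ≤ i * d + d) :
    i = (t - 1) / d ∨ i = t / d := by
  have hle : i ≤ t / d := (Nat.le_div_iff_mul_le hd).mpr h₁
  rcases Nat.eq_zero_or_pos t with rfl | ht
  · simp_all
  have hge : (t - 1) / d ≤ i := Nat.lt_succ_iff.mp <| (Nat.div_lt_iff_lt_mul hd).mpr <| by
    rw [Nat.succ_mul]; omega
  have hstep : t / d ≤ (t - 1) / d + 1 := by
    rw [← Nat.add_div_right _ hd]; exact Nat.div_le_div_right (by omega)
  omega

section LooseCycle

variable {V : Type} [DecidableEq V] {k : ℕ}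

theorem mem_looseEdgeIdx_div (hk : 2 ≤ k) (j : ℕ) : j ∈ looseEdgeIdx k (j / (k - 1)) := by
  rw [looseEdgeIdx, mem_Icc]
  exact ⟨Nat.div_mul_le_self j _, (Nat.lt_div_mul_add (by omega)).le⟩

/-- Every vertex of a loose cycle lies in at most two of its edges. -/
theorem card_filter_mem_looseEdgeIdx_mod_le_two (hk : 2 ≤ k) (m t : ℕ) :
    #{i ∈ range m | ∃ j ∈ looseEdgeIdx k i, j % (m * (k - 1)) = t} ≤ 2 := by
  set d := k - 1
  have hd : 0 < d := by omega
  have hsub : {i ∈ range m | ∃ j ∈ looseEdgeIdx k i, j % (m * d) = t} ⊆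
      if t = 0 then {0, m - 1} else {(t - 1) / d, t / d} := by
    intro i hi
    obtain ⟨him, j, hj, rfl⟩ := by simpa only [mem_filter, mem_range] using hi
    rw [looseEdgeIdx, mem_Icc] at hj
    have hjL : j ≤ m * d := hj.2.trans <| by
      rw [← Nat.succ_mul]; exact Nat.mul_le_mul_right _ him
    rcases hjL.lt_or_eq with hjL | rfl
    · rw [Nat.mod_eq_of_lt hjL]
      rcases Nat.eq_pred_div_or_eq_div hd hj.1 hj.2 with h | h <;> split_ifs <;> simp_all
    · -- the last edge wraps around to vertex `0`
      have : m ≤ i + 1 := Nat.le_of_mul_le_mul_right (by rw [Nat.succ_mul]; exact hj.2) hd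
      simp [show i = m - 1 by omega]
  refine (card_le_card hsub).trans ?_
  split_ifs <;> exact card_le_two

theorem mul_le_card_of_forall_looseEdge_subset (hk : 2 ≤ k) {n : ℕ} {v : ℕ → V}
    (hv : Set.InjOn v (Set.Iio (n * (k - 1)))) {A : Finset V}
    (hA : ∀ i < n, (looseEdgeIdx k i).image (fun j => v (j % (n * (k - 1)))) ⊆ A) :
    n * (k - 1) ≤ #A := by
  have himage : (range (n * (k - 1))).image v ⊆ A := by
    intro x hx
    obtain ⟨j, hj, rfl⟩ := mem_image.mp hx
    rw [mem_range] at hj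
    have hedge : j / (k - 1) < n := Nat.div_lt_of_lt_mul (by rwa [Nat.mul_comm])
    simpa only [Nat.mod_eq_of_lt hj] using
      hA _ hedge (mem_image_of_mem _ (mem_looseEdgeIdx_div hk j))
  calc n * (k - 1) = #((range (n * (k - 1))).image v) := by
        rw [card_image_of_injOn (by simpa using hv), card_range]
    _ ≤ #A := card_le_card himage

theorem le_two_mul_card_of_forall_looseEdge_meets (hk : 2 ≤ k) {m : ℕ} {v : ℕ → V}
    (hv : Set.InjOn v (Set.Iio (m * (k - 1)))) {B : Finset V}
    (hB : ∀ i < m, ∃ j ∈ looseEdgeIdx k i, v (j % (m * (k - 1))) ∈ B) :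
    m ≤ 2 * #B := by
  set L := m * (k - 1)
  set T := {t ∈ range L | v t ∈ B}
  have hT : #T ≤ #B :=
    card_le_card_of_injOn v (fun t ht => (mem_filter.mp ht).2)
      (hv.mono fun t ht => by simpa [T] using (mem_filter.mp ht).1)
  have hcover :
      range m ⊆ T.biUnion fun t => {i ∈ range m | ∃ j ∈ looseEdgeIdx k i, j % L = t} := by
    intro i hi
    obtain ⟨j, hj, hjB⟩ := hB i (mem_range.mp hi)
    have hL : 0 < L := Nat.mul_pos (by simp at hi; omega) (by omega)
    exact mem_biUnion.mpr ⟨j % L, mem_filter.mpr ⟨mem_range.mpr (Nat.mod_lt _ hL), hjB⟩,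
      mem_filter.mpr ⟨hi, j, hj, rfl⟩⟩
  calc m = #(range m) := (card_range m).symm
    _ ≤ #T * 2 := (card_le_card hcover).trans <| card_biUnion_le_card_mul _ _ _ fun t _ =>
        card_filter_mem_looseEdgeIdx_mod_le_two hk m t
    _ ≤ 2 * #B := by omega

end LooseCycle

section Coloring

variable {V : Type} [DecidableEq V] {k : ℕ}

def colorBySubset (A : Finset V) : Finset V → Bool := fun S => decide (S ⊆ A)

theorem not_hasLooseCycle_colorBySubset_true (hk : 2 ≤ k) {n : ℕ} {A : Finset V}
    (hA : #A < n * (k - 1)) : ¬ HasLooseCycle k (colorBySubset A) true n := by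
  rintro ⟨v, hv, hred⟩
  exact hA.not_ge <| mul_le_card_of_forall_looseEdge_subset hk hv fun i hi => by
    simpa [colorBySubset] using hred i hi

theorem not_hasLooseCycle_colorBySubset_false [Fintype V] (hk : 2 ≤ k) {m : ℕ} {A : Finset V}
    (hA : 2 * #Aᶜ < m) : ¬ HasLooseCycle k (colorBySubset A) false m := by
  rintro ⟨v, hv, hblue⟩
  refine hA.not_ge <| le_two_mul_card_of_forall_looseEdge_meets hk hv fun i hi => ?_
  obtain ⟨x, hx, hxA⟩ := not_subset.mp <| by simpa [colorBySubset] using hblue i hi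
  obtain ⟨j, hj, rfl⟩ := mem_image.mp hx
  exact ⟨j, hj, mem_compl.mpr hxA⟩

theorem exists_coloring_not_hasLooseCycle [Fintype V] (hk : 2 ≤ k) {m n : ℕ} (hm : 1 ≤ m)
    (hn : 1 ≤ n) (hV : Fintype.card V < (k - 1) * n + (m + 1) / 2 - 1) :
    ∃ col : Finset V → Bool,
      ¬ HasLooseCycle k col true n ∧ ¬ HasLooseCycle k col false m := by
  obtain ⟨A, -, hA⟩ := exists_subset_card_eq
    (show min (Fintype.card V) ((k - 1) * n - 1) ≤ #(univ : Finset V) by simp)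
  have hkn : 1 ≤ (k - 1) * n := Nat.mul_pos (by omega) hn
  refine ⟨colorBySubset A, not_hasLooseCycle_colorBySubset_true hk ?_,
    not_hasLooseCycle_colorBySubset_false hk ?_⟩
  · rw [Nat.mul_comm]; omega
  · rw [card_compl]; omega

end Coloring

/-- For `k ≥ 2` and `n ≥ m ≥ 3`, the Ramsey number of
`k`-uniform loose cycles satisfies `R(C^k_n, C^k_m) ≥ (k−1)n + ⌊(m+1)/2⌋ − 1`:
every `N` such that all red/blue colorings of the `k`-subsets of an `N`-set
contain a red copy of `C^k_n` or a blue copy of `C^k_m` satisfies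
`N ≥ (k−1)n + ⌊(m+1)/2⌋ − 1` (red = `true`, blue = `false`). -/
theorem cycle_cycle_ramsey_lower_bound (k m n : ℕ) (hk : 2 ≤ k) (hm : 3 ≤ m)
    (hmn : m ≤ n) :
    ∀ N : ℕ, (∀ col : Finset (Fin N) → Bool,
        HasLooseCycle k col true n ∨ HasLooseCycle k col false m) →
      (k - 1) * n + (m + 1) / 2 - 1 ≤ N := by
  intro N hN
  by_contra! hN_lt
  obtain ⟨col, hred, hblue⟩ := exists_coloring_not_hasLooseCycle (m := m) (n := n) hk
    (by omega) (by omega) ((Fintype.card_fin N).trans_lt hN_lt)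
  exact (hN col).elim hred hblue
end

section
/- Let k ≥ 2 and n ≥ m ≥ 3, and consider a red/blue coloring of all k-element subsets of a vertex set of size (k−1)n + ⌊(m+1)/2⌋. If the red subhypergraph contains a copy of the k-uniform loose cycle C^k_n, then either the red subhypergraph contains a copy of the k-uniform loose path P^k_n or the blue subhypergraph contains a copy of the k-uniform loose path P^k_m. -/
lemma mod_inj' {L X Y : ℕ} (h : X % L = Y % L) (h2 : X ≤ Y) (h3 : Y < X + L) : X = Y := by
  rcases Nat.eq_zero_or_pos L with hL | hL
  · omega
  have e1 := Nat.div_add_mod X L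
  have e2 := Nat.div_add_mod Y L
  have hab : X / L ≤ Y / L := Nat.div_le_div_right h2
  have hba : Y / L < X / L + 1 := by
    have hexp : L * (X / L + 1) = L * (X / L) + L := by ring
    have : L * (Y / L) < L * (X / L + 1) := by omega
    exact Nat.lt_of_mul_lt_mul_left this
  have hdiv : X / L = Y / L := by omega
  have : L * (X / L) = L * (Y / L) := by rw [hdiv]
  omega

lemma modq' (n q s r : ℕ) : (s * q + r) % (n * q) = (s % n * q + r) % (n * q) :=
  (Nat.ModEq.add_right r ((Nat.mod_modEq s n).mul_right' q)).symm

lemma image_Icc_eq' {α : Type} [DecidableEq α] (f g : ℕ → α) (a b d : ℕ)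
    (h1 : ∀ r ≤ d, ∃ s ≤ d, f (a + r) = g (b + s))
    (h2 : ∀ s ≤ d, ∃ r ≤ d, g (b + s) = f (a + r)) :
    (Finset.Icc a (a + d)).image f = (Finset.Icc b (b + d)).image g := by
  ext y
  simp only [Finset.mem_image, Finset.mem_Icc]
  constructor
  · rintro ⟨x, ⟨hx1, hx2⟩, rfl⟩
    obtain ⟨s, hs, hfs⟩ := h1 (x - a) (by omega)
    refine ⟨b + s, by omega, ?_⟩
    rw [← hfs]; congr 1; omega
  · rintro ⟨x, ⟨hx1, hx2⟩, rfl⟩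
    obtain ⟨r, hr, hfr⟩ := h2 (x - b) (by omega)
    refine ⟨a + r, by omega, ?_⟩
    rw [← hfr]; congr 1; omega

lemma not_dvd_between' {q j x : ℕ} (h1 : j * q < x) (h2 : x < (j+1) * q) : ¬ q ∣ x := by
  rintro ⟨c, rfl⟩
  have hjc : j < c := by
    have : q * j < q * c := by
      have e : j * q = q * j := by ring
      omega
    exact Nat.lt_of_mul_lt_mul_left this
  have hcj : c < j + 1 := by
    have : q * c < q * (j+1) := by
      have e : (j+1) * q = q * (j+1) := by ring
      omega
    exact Nat.lt_of_mul_lt_mul_left this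
  omega

lemma last_edge_blue {V : Type} [DecidableEq V] {k n : ℕ} {col : Finset V → Bool}
    (u : ℕ → V) (hinj : Set.InjOn u (Set.Iio (n * (k - 1) + 1)))
    (hred : ∀ i, i < n - 1 → col ((looseEdgeIdx k i).image u) = true)
    (hnored : ¬ HasLoosePath k col true n) :
    col ((looseEdgeIdx k (n - 1)).image u) = false := by
  rcases Bool.eq_false_or_eq_true (col ((looseEdgeIdx k (n-1)).image u)) with h | h
  swap
  · exact h
  exact absurd ⟨u, hinj, fun i hi => by
    rcases Nat.lt_or_ge i (n-1) with h' | h'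
    · exact hred i h'
    · have : i = n - 1 := by omega
      rw [this]; exact h⟩ hnored

lemma aux_blueR {V : Type} [DecidableEq V] {k n : ℕ} {col : Finset V → Bool} {v : ℕ → V}
    (hk : 2 ≤ k) (hn : 3 ≤ n)
    (hvinj : Set.InjOn v (Set.Iio (n * (k - 1))))
    (hvedge : ∀ i < n, col ((looseEdgeIdx k i).image (fun j => v (j % (n * (k - 1))))) = true)
    (hnored : ¬ HasLoosePath k col true n)
    (a : ℕ) (wv : V) (hw : ∀ x < n * (k-1), wv ≠ v x) :
    col ((looseEdgeIdx k (n-1)).image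
      (fun x => if x = n * (k-1) then wv else v ((x + a * (k-1)) % (n * (k-1))))) = false := by
  have hq1 : 1 ≤ k - 1 := by omega
  have h2q : 2 * (k-1) ≤ n * (k-1) := Nat.mul_le_mul_right _ (by omega)
  have hsub : (n-1) * (k-1) + (k-1) = n * (k-1) := by
    obtain ⟨n', rfl⟩ : ∃ n', n = n' + 1 := ⟨n - 1, by omega⟩
    simp; ring
  have hLpos : 0 < n * (k-1) := by omega
  apply last_edge_blue _ ?hinj ?hred hnored
  case hinj =>
    intro x hx y hy hxy
    simp only [Set.mem_Iio] at hx hy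
    by_cases hxL : x = n * (k-1) <;> by_cases hyL : y = n * (k-1)
    · omega
    · simp only [if_pos hxL, if_neg hyL] at hxy
      exact absurd hxy (hw _ (Nat.mod_lt _ hLpos))
    · simp only [if_neg hxL, if_pos hyL] at hxy
      exact absurd hxy.symm (hw _ (Nat.mod_lt _ hLpos))
    · simp only [if_neg hxL, if_neg hyL] at hxy
      have hmod := hvinj (Set.mem_Iio.2 (Nat.mod_lt _ hLpos)) (Set.mem_Iio.2 (Nat.mod_lt _ hLpos)) hxy
      have hx' : x < n * (k-1) := by omega
      have hy' : y < n * (k-1) := by omega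
      rcases Nat.le_total x y with hle | hle
      · have h9 := mod_inj' hmod (Nat.add_le_add_right hle _) (by omega)
        omega
      · have h9 := mod_inj' hmod.symm (Nat.add_le_add_right hle _) (by omega)
        omega
  case hred =>
    intro i hi
    have hne : ∀ r ≤ k - 1, i * (k-1) + r ≠ n * (k-1) := by
      intro r hr
      have e2 : (i+1) * (k-1) ≤ (n-1) * (k-1) := Nat.mul_le_mul_right _ (by omega)
      have e : (i+1) * (k-1) = i * (k-1) + (k-1) := by ring
      omega
    have key : (looseEdgeIdx k i).image
          (fun x => if x = n * (k-1) then wv else v ((x + a * (k-1)) % (n * (k-1))))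
        = (looseEdgeIdx k ((i + a) % n)).image (fun j => v (j % (n * (k-1)))) := by
      unfold looseEdgeIdx
      apply image_Icc_eq'
      · intro r hr
        refine ⟨r, hr, ?_⟩
        simp only [if_neg (hne r hr)]
        congr 1
        have e : i * (k-1) + r + a * (k-1) = (i + a) * (k-1) + r := by ring
        rw [e, modq']
      · intro s hs
        refine ⟨s, hs, ?_⟩
        simp only [if_neg (hne s hs)]
        have e : i * (k-1) + s + a * (k-1) = (i + a) * (k-1) + s := by ring
        rw [e]
        exact (congrArg v (modq' n (k-1) (i+a) s)).symm
    rw [key]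
    exact hvedge _ (Nat.mod_lt _ (by omega))

lemma aux_blueRev {V : Type} [DecidableEq V] {k n : ℕ} {col : Finset V → Bool} {v : ℕ → V}
    (hk : 2 ≤ k) (hn : 3 ≤ n)
    (hvinj : Set.InjOn v (Set.Iio (n * (k - 1))))
    (hvedge : ∀ i < n, col ((looseEdgeIdx k i).image (fun j => v (j % (n * (k - 1))))) = true)
    (hnored : ¬ HasLoosePath k col true n)
    (b : ℕ) (wv : V) (hw : ∀ x < n * (k-1), wv ≠ v x) :
    col ((looseEdgeIdx k (n-1)).image
      (fun x => if x = n * (k-1) then wv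
                else v ((b * (k-1) + (n * (k-1) - x)) % (n * (k-1))))) = false := by
  have hq1 : 1 ≤ k - 1 := by omega
  have h2q : 2 * (k-1) ≤ n * (k-1) := Nat.mul_le_mul_right _ (by omega)
  have hLpos : 0 < n * (k-1) := by omega
  apply last_edge_blue _ ?hinj ?hred hnored
  case hinj =>
    intro x hx y hy hxy
    simp only [Set.mem_Iio] at hx hy
    by_cases hxL : x = n * (k-1) <;> by_cases hyL : y = n * (k-1)
    · omega
    · simp only [if_pos hxL, if_neg hyL] at hxy
      exact absurd hxy (hw _ (Nat.mod_lt _ hLpos))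
    · simp only [if_neg hxL, if_pos hyL] at hxy
      exact absurd hxy.symm (hw _ (Nat.mod_lt _ hLpos))
    · simp only [if_neg hxL, if_neg hyL] at hxy
      have hmod := hvinj (Set.mem_Iio.2 (Nat.mod_lt _ hLpos)) (Set.mem_Iio.2 (Nat.mod_lt _ hLpos)) hxy
      have hx' : x < n * (k-1) := by omega
      have hy' : y < n * (k-1) := by omega
      rcases Nat.le_total x y with hle | hle
      · have h9 := mod_inj' hmod.symm (by omega) (by omega)
        omega
      · have h9 := mod_inj' hmod (by omega) (by omega)
        omega
  case hred =>
    intro i hi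
    have hne : ∀ r ≤ k - 1, i * (k-1) + r ≠ n * (k-1) := by
      intro r hr
      have e2 : (i+1) * (k-1) ≤ (n-1) * (k-1) := Nat.mul_le_mul_right _ (by omega)
      have e : (i+1) * (k-1) = i * (k-1) + (k-1) := by ring
      have hsub : (n-1) * (k-1) + (k-1) = n * (k-1) := by
        obtain ⟨n', rfl⟩ : ∃ n', n = n' + 1 := ⟨n - 1, by omega⟩
        simp; ring
      omega
    have keyidx : ∀ r ≤ k - 1,
        (b * (k-1) + (n * (k-1) - (i * (k-1) + r))) % (n * (k-1))
          = ((b + n - 1 - i) % n * (k-1) + ((k-1) - r)) % (n * (k-1)) := by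
      intro r hr
      obtain ⟨d, hd⟩ : ∃ d, n = i + d + 2 := ⟨n - i - 2, by omega⟩
      have e1 : n * (k-1) = i * (k-1) + d * (k-1) + 2 * (k-1) := by rw [hd]; ring
      have e2 : b + n - 1 - i = b + d + 1 := by omega
      have e3 : (b + d + 1) * (k-1) = b * (k-1) + d * (k-1) + (k-1) := by ring
      have e : b * (k-1) + (n * (k-1) - (i * (k-1) + r)) = (b + d + 1) * (k-1) + ((k-1) - r) := by
        omega
      rw [e2, e, modq']
    have key : (looseEdgeIdx k i).image
          (fun x => if x = n * (k-1) then wv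
                    else v ((b * (k-1) + (n * (k-1) - x)) % (n * (k-1))))
        = (looseEdgeIdx k ((b + n - 1 - i) % n)).image (fun j => v (j % (n * (k-1)))) := by
      unfold looseEdgeIdx
      apply image_Icc_eq'
      · intro r hr
        refine ⟨(k-1) - r, by omega, ?_⟩
        simp only [if_neg (hne r hr)]
        exact congrArg v (keyidx r hr)
      · intro s hs
        refine ⟨(k-1) - s, by omega, ?_⟩
        simp only [if_neg (hne ((k-1)-s) (by omega))]
        have h9 := keyidx ((k-1) - s) (by omega)
        have hss : (k-1) - ((k-1) - s) = s := by omega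
        rw [hss] at h9
        exact (congrArg v h9).symm
    rw [key]
    exact hvedge _ (Nat.mod_lt _ (by omega))

/-- Lemma 1. Let `k ≥ 2`, `n ≥ m ≥ 3`, and let the 3-subsets of
a vertex set of size `(k−1)n + ⌊(m+1)/2⌋` be red/blue colored (red = `true`,
blue = `false`).  If the red subhypergraph contains a copy of the loose cycle
`C^k_n`, then the red subhypergraph contains a copy of the loose path `P^k_n`
or the blue subhypergraph contains a copy of the loose path `P^k_m`. -/
theorem red_cycle_gives_red_path_or_blue_path (k m n : ℕ) (hk : 2 ≤ k)
    (hm : 3 ≤ m) (hmn : m ≤ n)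
    (col : Finset (Fin ((k - 1) * n + (m + 1) / 2)) → Bool)
    (hcyc : HasLooseCycle k col true n) :
    HasLoosePath k col true n ∨ HasLoosePath k col false m := by
  by_cases hnored : HasLoosePath k col true n
  · exact Or.inl hnored
  right
  obtain ⟨v, hvinj, hvedge⟩ := hcyc
  have hn : 3 ≤ n := le_trans hm hmn
  have hq1 : 1 ≤ k - 1 := by omega
  have h2q : 2 * (k-1) ≤ n * (k-1) := Nat.mul_le_mul_right _ (by omega)
  have hLpos : 0 < n * (k-1) := by omega
  have hmL : m * (k-1) ≤ n * (k-1) := Nat.mul_le_mul_right _ hmn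
  have hsub : (n-1) * (k-1) + (k-1) = n * (k-1) := by
    obtain ⟨n', rfl⟩ : ∃ n', n = n' + 1 := ⟨n - 1, by omega⟩
    simp; ring
  -- extra vertices
  have hScard : (m+1)/2 ≤ (Finset.univ \ (Finset.range (n*(k-1))).image v).card := by
    have h1 : ((Finset.range (n*(k-1))).image v).card ≤ n*(k-1) :=
      le_trans Finset.card_image_le (by simp)
    rw [Finset.card_sdiff_of_subset (Finset.subset_univ _), Finset.card_univ, Fintype.card_fin]
    have e : (k-1)*n = n*(k-1) := by ring
    omega
  obtain ⟨T, hTS, hTcard⟩ := Finset.exists_subset_card_eq hScard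
  set wf : ℕ → Fin ((k-1)*n + (m+1)/2) := fun i =>
    if h : i < (m+1)/2 then (T.orderIsoOfFin hTcard ⟨i, h⟩ : Fin ((k-1)*n + (m+1)/2))
    else v 0 with hwf
  have hwmem : ∀ i, i < (m+1)/2 → ∀ x, x < n*(k-1) → wf i ≠ v x := by
    intro i hi x hx heq
    have hmem : ((T.orderIsoOfFin hTcard ⟨i, hi⟩ : T) : Fin ((k-1)*n + (m+1)/2))
        ∈ Finset.univ \ (Finset.range (n*(k-1))).image v := hTS (Finset.coe_mem _)
    rw [Finset.mem_sdiff] at hmem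
    refine hmem.2 (Finset.mem_image.2 ⟨x, Finset.mem_range.2 hx, ?_⟩)
    rw [← heq]; simp only [hwf, dif_pos hi]
  have hwinj : ∀ i, i < (m+1)/2 → ∀ j, j < (m+1)/2 → wf i = wf j → i = j := by
    intro i hi j hj heq
    simp only [hwf, dif_pos hi, dif_pos hj] at heq
    have h2 := (T.orderIsoOfFin hTcard).injective (Subtype.coe_injective heq)
    exact congrArg Fin.val h2
  -- the blue path map
  set p : ℕ → Fin ((k-1)*n + (m+1)/2) := fun x =>
    if x < k-1 then v (x+1)
    else if x % (k-1) = 0 ∧ (x / (k-1)) % 2 = 1 then wf (x / (2*(k-1)))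
    else v (x % (n*(k-1))) with hp
  have hA : ∀ x, x < k-1 → p x = v (x+1) := by
    intro x hx; simp only [hp, if_pos hx]
  have hB : ∀ x, ¬ (x < k-1) → x % (k-1) = 0 → (x / (k-1)) % 2 = 1 →
      p x = wf (x / (2*(k-1))) := by
    intro x h1 h2 h3; simp only [hp, if_neg h1, if_pos (And.intro h2 h3)]
  have hC : ∀ x, ¬ (x < k-1) → ¬ (x % (k-1) = 0 ∧ (x / (k-1)) % 2 = 1) →
      p x = v (x % (n*(k-1))) := by
    intro x h1 h2; simp only [hp, if_neg h1, if_neg h2]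
  -- arithmetic helpers
  have hmul_mod : ∀ a : ℕ, (a*(k-1)) % (k-1) = 0 := fun a => Nat.mul_mod_left a _
  have hmul_div : ∀ a : ℕ, (a*(k-1)) / (k-1) = a := fun a => Nat.mul_div_cancel a (by omega)
  have hadd_mod : ∀ a r : ℕ, r < k-1 → (a*(k-1)+r) % (k-1) = r := by
    intro a r hr
    rw [mul_comm a (k-1), Nat.mul_add_mod, Nat.mod_eq_of_lt hr]
  have hdiv2 : ∀ a : ℕ, (a*(k-1)) / (2*(k-1)) = a / 2 := by
    intro a
    rw [mul_comm 2 (k-1), ← Nat.div_div_eq_div_mul, hmul_div]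
  have pv_w : ∀ c : ℕ, p ((2*c+1) * (k-1)) = wf c := by
    intro c
    have h1 : ¬ ((2*c+1) * (k-1) < k-1) := by
      have : 1*(k-1) ≤ (2*c+1)*(k-1) := Nat.mul_le_mul_right _ (by omega)
      omega
    rw [hB _ h1 (hmul_mod _) (by rw [hmul_div]; omega), hdiv2]
    congr 1
    omega
  -- class B structure
  have hBstruct : ∀ x, x ≤ m*(k-1) → x % (k-1) = 0 → (x / (k-1)) % 2 = 1 →
      x = (2*(x / (2*(k-1)))+1)*(k-1) ∧ x / (2*(k-1)) < (m+1)/2 := by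
    intro x hxm h2 h3
    have hd : (k-1) ∣ x := Nat.dvd_of_mod_eq_zero h2
    have he : x / (k-1) * (k-1) = x := Nat.div_mul_cancel hd
    have hdd : x / (2*(k-1)) = x / (k-1) / 2 := by
      rw [mul_comm 2 (k-1), ← Nat.div_div_eq_div_mul]
    have hjm : x / (k-1) ≤ m := by
      refine Nat.le_of_mul_le_mul_right ?_ (show 0 < k-1 by omega)
      omega
    constructor
    · have e : (2*(x / (2*(k-1)))+1)*(k-1) = (2*(x/(2*(k-1)))+1)*(k-1) := rfl
      have hj : x / (k-1) = 2*(x/(2*(k-1))) + 1 := by rw [hdd]; omega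
      calc x = x / (k-1) * (k-1) := he.symm
        _ = (2*(x/(2*(k-1)))+1)*(k-1) := by rw [← hj]
    · rw [hdd]; omega
    -- injectivity of the blue path map
  have hpinj : Set.InjOn p (Set.Iio (m * (k - 1) + 1)) := by
    intro x hx y hy heq
    simp only [Set.mem_Iio] at hx hy
    have hx' : x ≤ m*(k-1) := by omega
    have hy' : y ≤ m*(k-1) := by omega
    have hCarg : ∀ z, z ≤ m*(k-1) → ¬ (z < k-1) →
        ¬ (z % (k-1) = 0 ∧ (z/(k-1))%2 = 1) → z % (n*(k-1)) = 0 ∨ k-1 < z % (n*(k-1)) := by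
      intro z hz h1 h2
      have hzk : k - 1 < z := by
        rcases Nat.lt_or_ge (k-1) z with h | h
        · exact h
        · exfalso
          have hz' : z = k-1 := by omega
          subst hz'
          refine h2 ⟨?_, ?_⟩
          · have := hmul_mod 1; rwa [one_mul] at this
          · have := hmul_div 1; rw [one_mul] at this; rw [this]
      rcases Nat.lt_or_ge z (n*(k-1)) with h | h
      · right; rwa [Nat.mod_eq_of_lt h]
      · left
        have : z = n*(k-1) := by omega
        rw [this, Nat.mod_self]
    by_cases hxA : x < k-1 <;> by_cases hyA : y < k-1
    · rw [hA x hxA, hA y hyA] at heq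
      have := hvinj (Set.mem_Iio.2 (by omega)) (Set.mem_Iio.2 (by omega)) heq
      omega
    · rw [hA x hxA] at heq
      by_cases hyB : y % (k-1) = 0 ∧ (y/(k-1))%2 = 1
      · rw [hB y hyA hyB.1 hyB.2] at heq
        exact absurd heq.symm (hwmem _ (hBstruct y hy' hyB.1 hyB.2).2 _ (by omega))
      · rw [hC y hyA hyB] at heq
        have harg := hvinj (Set.mem_Iio.2 (by omega)) (Set.mem_Iio.2 (Nat.mod_lt _ hLpos)) heq
        rcases hCarg y hy' hyA hyB with h | h <;> omega
    · rw [hA y hyA] at heq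
      by_cases hxB : x % (k-1) = 0 ∧ (x/(k-1))%2 = 1
      · rw [hB x hxA hxB.1 hxB.2] at heq
        exact absurd heq (hwmem _ (hBstruct x hx' hxB.1 hxB.2).2 _ (by omega))
      · rw [hC x hxA hxB] at heq
        have harg := hvinj (Set.mem_Iio.2 (Nat.mod_lt _ hLpos)) (Set.mem_Iio.2 (by omega)) heq
        rcases hCarg x hx' hxA hxB with h | h <;> omega
    · by_cases hxB : x % (k-1) = 0 ∧ (x/(k-1))%2 = 1 <;>
        by_cases hyB : y % (k-1) = 0 ∧ (y/(k-1))%2 = 1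
      · rw [hB x hxA hxB.1 hxB.2, hB y hyA hyB.1 hyB.2] at heq
        have h1 := hBstruct x hx' hxB.1 hxB.2
        have h2 := hBstruct y hy' hyB.1 hyB.2
        have h3 := hwinj _ h1.2 _ h2.2 heq
        rw [h1.1, h2.1, h3]
      · rw [hB x hxA hxB.1 hxB.2, hC y hyA hyB] at heq
        exact absurd heq (hwmem _ (hBstruct x hx' hxB.1 hxB.2).2 _ (Nat.mod_lt _ hLpos))
      · rw [hC x hxA hxB, hB y hyA hyB.1 hyB.2] at heq
        exact absurd heq.symm (hwmem _ (hBstruct y hy' hyB.1 hyB.2).2 _ (Nat.mod_lt _ hLpos))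
      · rw [hC x hxA hxB, hC y hyA hyB] at heq
        have harg := hvinj (Set.mem_Iio.2 (Nat.mod_lt _ hLpos)) (Set.mem_Iio.2 (Nat.mod_lt _ hLpos)) heq
        rcases Nat.le_total x y with hle | hle
        · exact mod_inj' harg hle (by omega)
        · exact (mod_inj' harg.symm hle (by omega)).symm
  -- the edges of the blue path are blue
  have hedges : ∀ j, j < m → col ((looseEdgeIdx k j).image p) = false := by
    intro j hj
    by_cases hj0 : j = 0
    · subst hj0
      have key : (looseEdgeIdx k 0).image p
          = (looseEdgeIdx k (n-1)).image (fun x => if x = n*(k-1) then wf 0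
              else v ((0 * (k-1) + (n*(k-1) - x)) % (n*(k-1)))) := by
        unfold looseEdgeIdx
        apply image_Icc_eq'
        · intro r hr
          rcases Nat.lt_or_ge r (k-1) with h | h
          · refine ⟨(k-1) - (r+1), by omega, ?_⟩
            beta_reduce
            rw [if_neg (show (n-1)*(k-1) + ((k-1)-(r+1)) ≠ n*(k-1) by omega)]
            rw [show 0*(k-1) + r = r by omega, hA r h]
            congr 1
            have e : 0*(k-1) + (n*(k-1) - ((n-1)*(k-1) + ((k-1)-(r+1)))) = r+1 := by omega
            rw [e, Nat.mod_eq_of_lt (by omega)]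
          · refine ⟨k-1, le_refl _, ?_⟩
            beta_reduce
            rw [if_pos (show (n-1)*(k-1) + (k-1) = n*(k-1) from hsub)]
            rw [show 0*(k-1) + r = (2*0+1)*(k-1) by omega]
            exact pv_w 0
        · intro s hs
          rcases Nat.lt_or_ge s (k-1) with h | h
          · refine ⟨(k-1) - (s+1), by omega, ?_⟩
            beta_reduce
            rw [if_neg (show (n-1)*(k-1) + s ≠ n*(k-1) by omega)]
            rw [show 0*(k-1) + ((k-1) - (s+1)) = (k-1) - (s+1) by omega,
              hA _ (by omega)]
            refine (congrArg v ?_).symm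
            have e : 0*(k-1) + (n*(k-1) - ((n-1)*(k-1) + s)) = (k-1) - s := by omega
            rw [e, Nat.mod_eq_of_lt (by omega)]
            omega
          · refine ⟨k-1, le_refl _, ?_⟩
            beta_reduce
            rw [if_pos (show (n-1)*(k-1) + s = n*(k-1) by omega)]
            rw [show 0*(k-1) + (k-1) = (2*0+1)*(k-1) by omega]
            exact (pv_w 0).symm
      rw [key]
      exact aux_blueRev hk hn hvinj hvedge hnored 0 (wf 0)
        (fun x hx => hwmem 0 (by omega) x hx)
    · rcases Nat.even_or_odd j with ⟨c, hc⟩ | ⟨c, hc⟩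
      · -- j even, j ≥ 2 : right connector removed, rotation
        subst hc
        have hc1 : 1 ≤ c := by omega
        have hcm : c < (m+1)/2 := by omega
        have e4 : ((c+c)+1)*(k-1) = (c+c)*(k-1) + (k-1) := by ring
        have key : (looseEdgeIdx k (c+c)).image p
            = (looseEdgeIdx k (n-1)).image (fun x => if x = n*(k-1) then wf c
                else v ((x + ((c+c)+1) * (k-1)) % (n*(k-1)))) := by
          unfold looseEdgeIdx
          have hptw : ∀ r ≤ k-1, p ((c+c)*(k-1) + r)
              = (fun x => if x = n*(k-1) then wf c
                  else v ((x + ((c+c)+1) * (k-1)) % (n*(k-1)))) ((n-1)*(k-1) + r) := by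
            intro r hr
            beta_reduce
            have h2c : 2*(k-1) ≤ (c+c)*(k-1) := Nat.mul_le_mul_right _ (by omega)
            rcases Nat.lt_or_ge r (k-1) with h | h
            · rw [if_neg (show (n-1)*(k-1) + r ≠ n*(k-1) by omega)]
              rcases Nat.eq_zero_or_pos r with hr0 | hr0
              · subst hr0
                rw [hC _ (by omega) ?hcond]
                case hcond =>
                  rintro ⟨-, h2⟩
                  rw [show (c+c)*(k-1) + 0 = (c+c)*(k-1) by omega, hmul_div] at h2
                  omega
                congr 1
                have e : (n-1)*(k-1) + 0 + ((c+c)+1)*(k-1) = ((c+c)*(k-1) + 0) + n*(k-1) := by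
                  omega
                rw [e, Nat.add_mod_right]
              · rw [hC _ (by omega) ?hcond2]
                case hcond2 =>
                  rintro ⟨h1, -⟩
                  rw [hadd_mod _ _ h] at h1
                  omega
                congr 1
                have e : (n-1)*(k-1) + r + ((c+c)+1)*(k-1) = ((c+c)*(k-1) + r) + n*(k-1) := by
                  omega
                rw [e, Nat.add_mod_right]
            · have hrk : r = k-1 := by omega
              subst hrk
              rw [if_pos hsub]
              rw [show (c+c)*(k-1) + (k-1) = (2*c+1)*(k-1) by
                have : (2*c+1)*(k-1) = (c+c)*(k-1) + (k-1) := by ring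
                omega]
              exact pv_w c
          apply image_Icc_eq'
          · intro r hr; exact ⟨r, hr, hptw r hr⟩
          · intro s hs; exact ⟨s, hs, (hptw s hs).symm⟩
        rw [key]
        exact aux_blueR hk hn hvinj hvedge hnored ((c+c)+1) (wf c)
          (fun x hx => hwmem c hcm x hx)
      · -- j odd : left connector removed, reversal
        subst hc
        have hcm : c < (m+1)/2 := by omega
        have e4 : (2*c+2)*(k-1) = (2*c+1)*(k-1) + (k-1) := by ring
        have h1c : 1*(k-1) ≤ (2*c+1)*(k-1) := Nat.mul_le_mul_right _ (by omega)
        have key : (looseEdgeIdx k (2*c+1)).image p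
            = (looseEdgeIdx k (n-1)).image (fun x => if x = n*(k-1) then wf c
                else v (((2*c+1) * (k-1) + (n*(k-1) - x)) % (n*(k-1)))) := by
          unfold looseEdgeIdx
          have hptw : ∀ r ≤ k-1, p ((2*c+1)*(k-1) + r)
              = (fun x => if x = n*(k-1) then wf c
                  else v (((2*c+1) * (k-1) + (n*(k-1) - x)) % (n*(k-1)))) ((n-1)*(k-1) + ((k-1) - r)) := by
            intro r hr
            beta_reduce
            rcases Nat.eq_zero_or_pos r with hr0 | hr0
            · subst hr0
              rw [if_pos (by omega : (n-1)*(k-1) + ((k-1) - 0) = n*(k-1))]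
              rw [show (2*c+1)*(k-1) + 0 = (2*c+1)*(k-1) by omega]
              exact pv_w c
            · rw [if_neg (show (n-1)*(k-1) + ((k-1) - r) ≠ n*(k-1) by omega)]
              have hval : p ((2*c+1)*(k-1) + r) = v (((2*c+1)*(k-1) + r) % (n*(k-1))) := by
                rcases Nat.lt_or_ge r (k-1) with h | h
                · refine hC _ (by omega) ?_
                  rintro ⟨h1, -⟩
                  rw [hadd_mod _ _ h] at h1
                  omega
                · have hrk : r = k-1 := by omega
                  subst hrk
                  rw [show (2*c+1)*(k-1) + (k-1) = (2*c+2)*(k-1) by omega]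
                  refine hC _ (by omega) ?_
                  rintro ⟨-, h2⟩
                  rw [hmul_div] at h2
                  omega
              rw [hval]
              congr 1
              have e : (2*c+1)*(k-1) + (n*(k-1) - ((n-1)*(k-1) + ((k-1) - r)))
                  = (2*c+1)*(k-1) + r := by omega
              rw [e]
          apply image_Icc_eq'
          · intro r hr; exact ⟨(k-1) - r, by omega, hptw r hr⟩
          · intro s hs
            refine ⟨(k-1) - s, by omega, ?_⟩
            have h9 := hptw ((k-1) - s) (by omega)
            rw [show (k-1) - ((k-1) - s) = s by omega] at h9
            exact h9.symm
        rw [key]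
        exact aux_blueRev hk hn hvinj hvedge hnored (2*c+1) (wf c)
          (fun x hx => hwmem c hcm x hx)
  exact ⟨p, hpinj, hedges⟩
end

section
/- Let n ≥ 10 and consider a red/blue coloring of all 3-element subsets of an n-element vertex set. Let P be a red loose path of maximum length among red loose paths, let A be a set of five consecutive vertices of P, and let W = {x₁, x₂, x₃} be a set of three vertices disjoint from V(P). Then there exist vertices x, y ∈ W with x ≠ y and vertices v_i, v_j, v_k ∈ A, all lying in (the union of) two consecutive edges of P, such that both triples {x, v_i, v_j} and {v_j, v_k, y} are colored blue; that is, there is a blue ϖ_S-configuration with S ⊆ A whose two end vertices lie in W. -/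
set_option maxHeartbeats 1600000

lemma edgeIdx3 (i : ℕ) : looseEdgeIdx 3 i = {2*i, 2*i+1, 2*i+2} := by
  unfold looseEdgeIdx
  ext m
  simp [Finset.mem_Icc]
  omega

lemma edge_image {V : Type} [DecidableEq V] (v : ℕ → V) (i : ℕ) :
    (looseEdgeIdx 3 i).image v = {v (2*i), v (2*i+1), v (2*i+2)} := by
  rw [edgeIdx3]
  simp

lemma splice {n : ℕ} (col : Finset (Fin n) → Bool) (p c d : ℕ) (v u : ℕ → Fin n)
    (hP : IsLoosePathCopy 3 col true p v)
    (hd : 1 ≤ d) (hcd : c + d ≤ p)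
    (hu0 : u 0 = v (2*c)) (huE : u (2*d+2) = v (2*c+2*d))
    (huinj : Set.InjOn u (Set.Iio (2*d+3)))
    (hdisj : ∀ m, 0 < m → m < 2*d+2 → ∀ i, i ≤ 2*p → (i < 2*c ∨ 2*c+2*d < i) → u m ≠ v i)
    (hred : ∀ j, j ≤ d → col {u (2*j), u (2*j+1), u (2*j+2)} = true) :
    HasLoosePath 3 col true (p+1) := by
  obtain ⟨hvinj0, hcol⟩ := hP
  have hvinj : ∀ i j, i ≤ 2*p → j ≤ 2*p → v i = v j → i = j := by
    intro i j hi hj hij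
    exact hvinj0 (Set.mem_Iio.mpr (by omega)) (Set.mem_Iio.mpr (by omega)) hij
  have huinj' : ∀ i j, i ≤ 2*d+2 → j ≤ 2*d+2 → u i = u j → i = j := by
    intro i j hi hj hij
    exact huinj (Set.mem_Iio.mpr (by omega)) (Set.mem_Iio.mpr (by omega)) hij
  set w : ℕ → Fin n := fun m => if m ≤ 2*c then v m else if m ≤ 2*c+2*d+2 then u (m - 2*c) else v (m-2) with hw
  have wlow : ∀ m, m ≤ 2*c → w m = v m := by
    intro m hm; simp only [hw]; rw [if_pos hm]
  have wmid : ∀ k, k ≤ 2*d+2 → w (2*c+k) = u k := by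
    intro k hk
    by_cases h0 : k = 0
    · subst h0; rw [wlow _ (by omega), hu0]; norm_num
    · simp only [hw]
      rw [if_neg (by omega), if_pos (by omega), Nat.add_sub_cancel_left]
  have whigh : ∀ m, 2*c+2*d+2 ≤ m → w m = v (m-2) := by
    intro m hm
    rcases eq_or_lt_of_le hm with h | h
    · rw [← h, show w (2*c+2*d+2) = u (2*d+2) from wmid (2*d+2) le_rfl, huE,
        show 2*c+2*d+2-2 = 2*c+2*d from by omega]
    · simp only [hw]; rw [if_neg (by omega), if_neg (by omega)]
  refine ⟨w, ?_, ?_⟩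
  · -- injectivity
    have key : ∀ m1 m2, m1 < 2*p+3 → m2 < 2*p+3 → m1 ≤ m2 → w m1 = w m2 → m1 = m2 := by
      intro m1 m2 h1 h2 hle heq
      by_cases a1 : m1 ≤ 2*c
      · by_cases b1 : m2 ≤ 2*c
        · rw [wlow _ a1, wlow _ b1] at heq
          exact hvinj _ _ (by omega) (by omega) heq
        · by_cases b2 : m2 < 2*c+2*d+2
          · obtain ⟨k, rfl⟩ : ∃ k, m2 = 2*c + k := ⟨m2 - 2*c, by omega⟩
            rw [wlow _ a1, wmid _ (by omega)] at heq
            rcases eq_or_lt_of_le a1 with h | h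
            · subst h
              rw [← hu0] at heq
              have := huinj' _ _ (by omega) (by omega) heq
              omega
            · exact absurd heq.symm (hdisj k (by omega) (by omega) m1 (by omega) (Or.inl h))
          · rw [wlow _ a1, whigh _ (by omega)] at heq
            have := hvinj _ _ (by omega) (by omega) heq
            omega
      · by_cases a2 : m1 < 2*c+2*d+2
        · obtain ⟨k1, rfl⟩ : ∃ k, m1 = 2*c + k := ⟨m1 - 2*c, by omega⟩
          rw [wmid _ (by omega)] at heq
          by_cases b2 : m2 < 2*c+2*d+2
          · obtain ⟨k2, rfl⟩ : ∃ k2, m2 = 2*c + k2 := ⟨m2 - 2*c, by omega⟩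
            rw [wmid _ (by omega)] at heq
            have := huinj' _ _ (by omega) (by omega) heq
            omega
          · rw [whigh _ (by omega)] at heq
            by_cases hE : m2 = 2*c+2*d+2
            · subst hE
              rw [show 2*c+2*d+2-2 = 2*c+2*d by omega, ← huE] at heq
              have := huinj' _ _ (by omega) (by omega) heq
              omega
            · exact absurd heq (hdisj k1 (by omega) (by omega) (m2-2) (by omega) (Or.inr (by omega)))
        · by_cases b2 : m2 < 2*c+2*d+2
          · omega
          · rw [whigh _ (by omega), whigh _ (by omega)] at heq
            have := hvinj _ _ (by omega) (by omega) heq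
            omega
    intro m1 hm1 m2 hm2 heq
    simp only [Set.mem_Iio] at hm1 hm2
    rcases le_total m1 m2 with h | h
    · exact key m1 m2 (by omega) (by omega) h heq
    · exact (key m2 m1 (by omega) (by omega) h heq.symm).symm
  · intro i hi
    rw [edge_image]
    by_cases h1 : i < c
    · rw [wlow _ (by omega), wlow _ (by omega), wlow _ (by omega)]
      have := hcol i (by omega)
      rw [edge_image] at this
      exact this
    · by_cases h2 : i ≤ c + d
      · have e1 : w (2*i) = u (2*(i-c)) := by
          rw [show 2*i = 2*c + 2*(i-c) by omega, wmid _ (by omega)]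
        have e2 : w (2*i+1) = u (2*(i-c)+1) := by
          rw [show 2*i+1 = 2*c + (2*(i-c)+1) by omega, wmid _ (by omega)]
        have e3 : w (2*i+2) = u (2*(i-c)+2) := by
          rw [show 2*i+2 = 2*c + (2*(i-c)+2) by omega, wmid _ (by omega)]
        rw [e1, e2, e3]
        exact hred (i-c) (by omega)
      · rw [whigh _ (by omega), whigh _ (by omega), whigh _ (by omega)]
        have := hcol (i-1) (by omega)
        rw [edge_image] at this
        rw [show 2*i-2 = 2*(i-1) by omega, show 2*i+1-2 = 2*(i-1)+1 by omega,
          show 2*i+2-2 = 2*(i-1)+2 by omega]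
        exact this

lemma R1 {n : ℕ} (col : Finset (Fin n) → Bool) (p c : ℕ) (v : ℕ → Fin n)
    (hP : IsLoosePathCopy 3 col true p v) (hc : c + 1 ≤ p)
    (x y : Fin n) (hxy : x ≠ y)
    (hxv : ∀ i, i ≤ 2*p → x ≠ v i) (hyv : ∀ i, i ≤ 2*p → y ≠ v i)
    (h1 : col {x, v (2*c), v (2*c+1)} = true)
    (h2 : col {v (2*c+1), v (2*c+2), y} = true) :
    HasLoosePath 3 col true (p+1) := by
  have hvinj : ∀ i j, i ≤ 2*p → j ≤ 2*p → i ≠ j → v i ≠ v j := by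
    intro i j hi hj hij h
    exact hij (hP.1 (Set.mem_Iio.mpr (by omega)) (Set.mem_Iio.mpr (by omega)) h)
  apply splice col p c 1 v
    (fun m => if m = 1 then x else if m = 3 then y else v (2*c + m/2)) hP le_rfl hc
  · norm_num
  · norm_num
  · intro a ha b hb heq
    simp only [Set.mem_Iio] at ha hb
    simp only at heq
    split_ifs at heq with g1 g2 g3 g4 g5 g6 g7 g8
    all_goals first
      | omega
      | exact (hxy heq).elim
      | exact (hxy heq.symm).elim
      | exact (hxv _ (by omega) heq).elim
      | exact (hxv _ (by omega) heq.symm).elim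
      | exact (hyv _ (by omega) heq).elim
      | exact (hyv _ (by omega) heq.symm).elim
      | (by_cases hab : a = b
         · exact hab
         · exact (hvinj _ _ (by omega) (by omega) (by omega) heq).elim)
  · intro m hm1 hm2 i hi hside
    split_ifs with g1 g2
    · exact hxv i hi
    · exact hyv i hi
    · exact hvinj _ _ (by omega) hi (by omega)
  · intro j hj
    interval_cases j
    · norm_num
      rw [show ({v (2*c), x, v (2*c+1)} : Finset (Fin n)) = {x, v (2*c), v (2*c+1)} from by
        ext z; simp; tauto]
      exact h1
    · norm_num
      rw [show ({v (2*c+1), y, v (2*c+2)} : Finset (Fin n)) = {v (2*c+1), v (2*c+2), y} from by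
        ext z; simp; tauto]
      exact h2

lemma R2 {n : ℕ} (col : Finset (Fin n) → Bool) (p c : ℕ) (v : ℕ → Fin n)
    (hP : IsLoosePathCopy 3 col true p v) (hc : c + 2 ≤ p)
    (x y : Fin n) (hxy : x ≠ y)
    (hxv : ∀ i, i ≤ 2*p → x ≠ v i) (hyv : ∀ i, i ≤ 2*p → y ≠ v i)
    (h1 : col {x, v (2*c), v (2*c+1)} = true)
    (h2 : col {v (2*c+1), v (2*c+3), y} = true) :
    HasLoosePath 3 col true (p+1) := by
  have hvinj : ∀ i j, i ≤ 2*p → j ≤ 2*p → i ≠ j → v i ≠ v j := by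
    intro i j hi hj hij h
    exact hij (hP.1 (Set.mem_Iio.mpr (by omega)) (Set.mem_Iio.mpr (by omega)) h)
  apply splice col p c 2 v
    (fun m => if m = 1 then x else if m = 3 then y else
      v (if m = 0 then 2*c else if m = 2 then 2*c+1 else if m = 4 then 2*c+3
         else if m = 5 then 2*c+2 else 2*c+4)) hP (by omega) hc
  · norm_num
  · norm_num
  · intro a ha b hb heq
    simp only [Set.mem_Iio] at ha hb
    simp only at heq
    split_ifs at heq
    all_goals first
      | omega
      | exact (hxy heq).elim
      | exact (hxy heq.symm).elim
      | exact (hxv _ (by omega) heq).elim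
      | exact (hxv _ (by omega) heq.symm).elim
      | exact (hyv _ (by omega) heq).elim
      | exact (hyv _ (by omega) heq.symm).elim
      | (by_cases hab : a = b
         · exact hab
         · exact (hvinj _ _ (by omega) (by omega) (by omega) heq).elim)
  · intro m hm1 hm2 i hi hside
    split_ifs with g1 g2
    · exact hxv i hi
    · exact hyv i hi
    all_goals exact hvinj _ _ (by omega) hi (by omega)
  · intro j hj
    have hE := hP.2 (c+1) (by omega)
    rw [edge_image, show 2*(c+1) = 2*c+2 from by omega, show 2*c+2+1 = 2*c+3 from by omega,
      show 2*c+2+2 = 2*c+4 from by omega] at hE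
    interval_cases j
    · norm_num
      rw [show ({v (2*c), x, v (2*c+1)} : Finset (Fin n)) = {x, v (2*c), v (2*c+1)} from by
        ext z; simp; tauto]
      exact h1
    · norm_num
      rw [show ({v (2*c+1), y, v (2*c+3)} : Finset (Fin n)) = {v (2*c+1), v (2*c+3), y} from by
        ext z; simp; tauto]
      exact h2
    · norm_num
      rw [show ({v (2*c+3), v (2*c+2), v (2*c+4)} : Finset (Fin n))
          = {v (2*c+2), v (2*c+3), v (2*c+4)} from by ext z; simp; tauto]
      exact hE

lemma R3 {n : ℕ} (col : Finset (Fin n) → Bool) (p c : ℕ) (v : ℕ → Fin n)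
    (hP : IsLoosePathCopy 3 col true p v) (hc : c + 2 ≤ p)
    (x y : Fin n) (hxy : x ≠ y)
    (hxv : ∀ i, i ≤ 2*p → x ≠ v i) (hyv : ∀ i, i ≤ 2*p → y ≠ v i)
    (h1 : col {v (2*c), v (2*c+3), x} = true)
    (h2 : col {v (2*c+3), v (2*c+1), y} = true)
    (h3 : col {v (2*c+4), v (2*c+2), y} = true) :
    HasLoosePath 3 col true (p+1) := by
  have hvinj : ∀ i j, i ≤ 2*p → j ≤ 2*p → i ≠ j → v i ≠ v j := by
    intro i j hi hj hij h
    exact hij (hP.1 (Set.mem_Iio.mpr (by omega)) (Set.mem_Iio.mpr (by omega)) h)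
  apply splice col p c 2 v
    (fun m => if m = 1 then x else if m = 4 then y else
      v (if m = 0 then 2*c else if m = 2 then 2*c+3 else if m = 3 then 2*c+1
         else if m = 5 then 2*c+2 else 2*c+4)) hP (by omega) hc
  · norm_num
  · norm_num
  · intro a ha b hb heq
    simp only [Set.mem_Iio] at ha hb
    simp only at heq
    split_ifs at heq
    all_goals first
      | omega
      | exact (hxy heq).elim
      | exact (hxy heq.symm).elim
      | exact (hxv _ (by omega) heq).elim
      | exact (hxv _ (by omega) heq.symm).elim
      | exact (hyv _ (by omega) heq).elim
      | exact (hyv _ (by omega) heq.symm).elim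
      | (by_cases hab : a = b
         · exact hab
         · exact (hvinj _ _ (by omega) (by omega) (by omega) heq).elim)
  · intro m hm1 hm2 i hi hside
    split_ifs with g1 g2
    · exact hxv i hi
    · exact hyv i hi
    all_goals exact hvinj _ _ (by omega) hi (by omega)
  · intro j hj
    interval_cases j
    · norm_num
      rw [show ({v (2*c), x, v (2*c+3)} : Finset (Fin n)) = {v (2*c), v (2*c+3), x} from by
        ext z; simp; tauto]
      exact h1
    · norm_num
      exact h2
    · norm_num
      rw [show ({y, v (2*c+2), v (2*c+4)} : Finset (Fin n)) = {v (2*c+4), v (2*c+2), y} from by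
        ext z; simp; tauto]
      exact h3

lemma R4 {n : ℕ} (col : Finset (Fin n) → Bool) (p c : ℕ) (v : ℕ → Fin n)
    (hP : IsLoosePathCopy 3 col true p v) (hc : c + 2 ≤ p)
    (x y : Fin n) (hxy : x ≠ y)
    (hxv : ∀ i, i ≤ 2*p → x ≠ v i) (hyv : ∀ i, i ≤ 2*p → y ≠ v i)
    (h1 : col {v (2*c), v (2*c+2), x} = true)
    (h2 : col {v (2*c+1), v (2*c+2), y} = true)
    (h3 : col {v (2*c+3), v (2*c+4), y} = true) :
    HasLoosePath 3 col true (p+1) := by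
  have hvinj : ∀ i j, i ≤ 2*p → j ≤ 2*p → i ≠ j → v i ≠ v j := by
    intro i j hi hj hij h
    exact hij (hP.1 (Set.mem_Iio.mpr (by omega)) (Set.mem_Iio.mpr (by omega)) h)
  apply splice col p c 2 v
    (fun m => if m = 1 then x else if m = 4 then y else
      v (if m = 0 then 2*c else if m = 2 then 2*c+2 else if m = 3 then 2*c+1
         else if m = 5 then 2*c+3 else 2*c+4)) hP (by omega) hc
  · norm_num
  · norm_num
  · intro a ha b hb heq
    simp only [Set.mem_Iio] at ha hb
    simp only at heq
    split_ifs at heq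
    all_goals first
      | omega
      | exact (hxy heq).elim
      | exact (hxy heq.symm).elim
      | exact (hxv _ (by omega) heq).elim
      | exact (hxv _ (by omega) heq.symm).elim
      | exact (hyv _ (by omega) heq).elim
      | exact (hyv _ (by omega) heq.symm).elim
      | (by_cases hab : a = b
         · exact hab
         · exact (hvinj _ _ (by omega) (by omega) (by omega) heq).elim)
  · intro m hm1 hm2 i hi hside
    split_ifs with g1 g2
    · exact hxv i hi
    · exact hyv i hi
    all_goals exact hvinj _ _ (by omega) hi (by omega)
  · intro j hj
    interval_cases j
    · norm_num
      rw [show ({v (2*c), x, v (2*c+2)} : Finset (Fin n)) = {v (2*c), v (2*c+2), x} from by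
        ext z; simp; tauto]
      exact h1
    · norm_num
      rw [show ({v (2*c+2), v (2*c+1), y} : Finset (Fin n)) = {v (2*c+1), v (2*c+2), y} from by
        ext z; simp; tauto]
      exact h2
    · norm_num
      rw [show ({y, v (2*c+3), v (2*c+4)} : Finset (Fin n)) = {v (2*c+3), v (2*c+4), y} from by
        ext z; simp; tauto]
      exact h3

lemma R5 {n : ℕ} (col : Finset (Fin n) → Bool) (p c : ℕ) (v : ℕ → Fin n)
    (hP : IsLoosePathCopy 3 col true p v) (hc : c + 3 ≤ p)
    (x y : Fin n) (hxy : x ≠ y)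
    (hxv : ∀ i, i ≤ 2*p → x ≠ v i) (hyv : ∀ i, i ≤ 2*p → y ≠ v i)
    (h1 : col {v (2*c+3), v (2*c+1), x} = true)
    (h2 : col {v (2*c+3), v (2*c+5), y} = true) :
    HasLoosePath 3 col true (p+1) := by
  have hvinj : ∀ i j, i ≤ 2*p → j ≤ 2*p → i ≠ j → v i ≠ v j := by
    intro i j hi hj hij h
    exact hij (hP.1 (Set.mem_Iio.mpr (by omega)) (Set.mem_Iio.mpr (by omega)) h)
  apply splice col p c 3 v
    (fun m => if m = 3 then x else if m = 5 then y else
      v (if m = 0 then 2*c else if m = 1 then 2*c+2 else if m = 2 then 2*c+1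
         else if m = 4 then 2*c+3 else if m = 6 then 2*c+5 else if m = 7 then 2*c+4
         else 2*c+6)) hP (by omega) hc
  · norm_num
  · norm_num
  · intro a ha b hb heq
    simp only [Set.mem_Iio] at ha hb
    simp only at heq
    split_ifs at heq
    all_goals first
      | omega
      | exact (hxy heq).elim
      | exact (hxy heq.symm).elim
      | exact (hxv _ (by omega) heq).elim
      | exact (hxv _ (by omega) heq.symm).elim
      | exact (hyv _ (by omega) heq).elim
      | exact (hyv _ (by omega) heq.symm).elim
      | (by_cases hab : a = b
         · exact hab
         · exact (hvinj _ _ (by omega) (by omega) (by omega) heq).elim)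
  · intro m hm1 hm2 i hi hside
    split_ifs with g1 g2
    · exact hxv i hi
    · exact hyv i hi
    all_goals exact hvinj _ _ (by omega) hi (by omega)
  · intro j hj
    have hE0 := hP.2 c (by omega)
    rw [edge_image] at hE0
    have hE2 := hP.2 (c+2) (by omega)
    rw [edge_image, show 2*(c+2) = 2*c+4 from by omega, show 2*c+4+1 = 2*c+5 from by omega,
      show 2*c+4+2 = 2*c+6 from by omega] at hE2
    interval_cases j
    · norm_num
      rw [show ({v (2*c), v (2*c+2), v (2*c+1)} : Finset (Fin n))
          = {v (2*c), v (2*c+1), v (2*c+2)} from by ext z; simp; tauto]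
      exact hE0
    · norm_num
      rw [show ({v (2*c+1), x, v (2*c+3)} : Finset (Fin n)) = {v (2*c+3), v (2*c+1), x} from by
        ext z; simp; tauto]
      exact h1
    · norm_num
      rw [show ({v (2*c+3), y, v (2*c+5)} : Finset (Fin n)) = {v (2*c+3), v (2*c+5), y} from by
        ext z; simp; tauto]
      exact h2
    · norm_num
      rw [show ({v (2*c+5), v (2*c+4), v (2*c+6)} : Finset (Fin n))
          = {v (2*c+4), v (2*c+5), v (2*c+6)} from by ext z; simp; tauto]
      exact hE2

/-- Lemma 2. Let `n ≥ 10` and let the 3-subsets of an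
`n`-element vertex set be red/blue colored (red = `true`, blue = `false`).
Let `v` describe a red loose path `P` of maximum length `p` (with consecutive
vertices `v 0, …, v (2p)`), let `A = {v a, …, v (a+4)}` be a set of five
consecutive vertices of `P`, and let `x₁, x₂, x₃` be three distinct vertices
not on `P`.  Then there are two distinct vertices `x ≠ y` among
`{x₁, x₂, x₃}` and pairwise distinct indices `i, j, l` — all lying in the
range of `A` and all inside the union of two consecutive edges of `P` — such
that both triples `{x, v i, v j}` and `{v j, v l, y}` are blue; i.e. there is a
blue `ϖ_S`-configuration with `S ⊆ A` whose end vertices lie in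
`{x₁, x₂, x₃}`. -/
theorem blue_configuration_exists (n : ℕ) (hn : 10 ≤ n)
    (col : Finset (Fin n) → Bool)
    (p : ℕ) (v : ℕ → Fin n)
    (hP : IsLoosePathCopy 3 col true p v)
    (hmax : ∀ (q : ℕ) (w : ℕ → Fin n), IsLoosePathCopy 3 col true q w → q ≤ p)
    (a : ℕ) (ha : a + 4 ≤ 2 * p)
    (x₁ x₂ x₃ : Fin n) (hx : ({x₁, x₂, x₃} : Finset (Fin n)).card = 3)
    (hW : ∀ w ∈ ({x₁, x₂, x₃} : Finset (Fin n)), ∀ i ≤ 2 * p, w ≠ v i) :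
    ∃ x ∈ ({x₁, x₂, x₃} : Finset (Fin n)), ∃ y ∈ ({x₁, x₂, x₃} : Finset (Fin n)),
      x ≠ y ∧
      ∃ i j l : ℕ, i ≠ j ∧ j ≠ l ∧ i ≠ l ∧
        (∃ e : ℕ, e + 2 ≤ p ∧
          i ∈ Finset.Icc (2 * e) (2 * e + 4) ∧
          j ∈ Finset.Icc (2 * e) (2 * e + 4) ∧
          l ∈ Finset.Icc (2 * e) (2 * e + 4)) ∧
        i ∈ Finset.Icc a (a + 4) ∧ j ∈ Finset.Icc a (a + 4) ∧
        l ∈ Finset.Icc a (a + 4) ∧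
        col {x, v i, v j} = false ∧ col {v j, v l, y} = false := by
  by_contra G
  have pair_le : ∀ (u w : Fin n), ({u, w} : Finset (Fin n)).card ≤ 2 := by
    intro u w; exact le_trans (Finset.card_insert_le _ _) (by simp)
  have h12 : x₁ ≠ x₂ := by
    intro h; rw [h] at hx
    have hsub : ({x₂, x₂, x₃} : Finset (Fin n)) ⊆ {x₂, x₃} := by
      intro z hz; simp at hz ⊢; tauto
    have := Finset.card_le_card hsub; have := pair_le x₂ x₃; omega
  have h13 : x₁ ≠ x₃ := by
    intro h; rw [h] at hx
    have hsub : ({x₃, x₂, x₃} : Finset (Fin n)) ⊆ {x₂, x₃} := by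
      intro z hz; simp at hz ⊢; tauto
    have := Finset.card_le_card hsub; have := pair_le x₂ x₃; omega
  have h23 : x₂ ≠ x₃ := by
    intro h; rw [h] at hx
    have hsub : ({x₁, x₃, x₃} : Finset (Fin n)) ⊆ {x₁, x₃} := by
      intro z hz; simp at hz ⊢; tauto
    have := Finset.card_le_card hsub; have := pair_le x₁ x₃; omega
  have m1 : x₁ ∈ ({x₁, x₂, x₃} : Finset (Fin n)) := by simp
  have m2 : x₂ ∈ ({x₁, x₂, x₃} : Finset (Fin n)) := by simp
  have m3 : x₃ ∈ ({x₁, x₂, x₃} : Finset (Fin n)) := by simp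
  have hmax' : ¬ HasLoosePath 3 col true (p+1) := by
    rintro ⟨w, hw⟩; have := hmax (p+1) w hw; omega
  have hcfg : ∀ x y, x ∈ ({x₁, x₂, x₃} : Finset (Fin n)) →
      y ∈ ({x₁, x₂, x₃} : Finset (Fin n)) → x ≠ y →
      ∀ i j l e : ℕ,
      (i ≠ j ∧ j ≠ l ∧ i ≠ l ∧ e + 2 ≤ p ∧ 2*e ≤ i ∧ i ≤ 2*e+4 ∧ 2*e ≤ j ∧ j ≤ 2*e+4 ∧
        2*e ≤ l ∧ l ≤ 2*e+4 ∧ a ≤ i ∧ i ≤ a+4 ∧ a ≤ j ∧ j ≤ a+4 ∧ a ≤ l ∧ l ≤ a+4) →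
      col {x, v i, v j} = false → col {v j, v l, y} = false → False := by
    intro x y hxw hyw hxy i j l e hc hb1 hb2
    obtain ⟨c1,c2,c3,c4,c5,c6,c7,c8,c9,c10,c11,c12,c13,c14,c15,c16⟩ := hc
    exact G ⟨x, hxw, y, hyw, hxy, i, j, l, c1, c2, c3,
      ⟨e, c4, Finset.mem_Icc.mpr ⟨c5,c6⟩, Finset.mem_Icc.mpr ⟨c7,c8⟩, Finset.mem_Icc.mpr ⟨c9,c10⟩⟩,
      Finset.mem_Icc.mpr ⟨c11,c12⟩, Finset.mem_Icc.mpr ⟨c13,c14⟩,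
      Finset.mem_Icc.mpr ⟨c15,c16⟩, hb1, hb2⟩
  have bool1 : ∀ a b c : Bool, a ≠ c → b ≠ c → a = b := by decide
  rcases Nat.even_or_odd a with ⟨c, hc⟩ | ⟨c, hc⟩
  · -- a = c + c (even)
    subst hc
    have hAB : ∀ x y, x ∈ ({x₁, x₂, x₃} : Finset (Fin n)) →
        y ∈ ({x₁, x₂, x₃} : Finset (Fin n)) → x ≠ y →
        col {x, v (2*c), v (2*c+1)} ≠ col {v (2*c+1), v (2*c+2), y} := by
      intro x y hxw hyw hxy h
      cases hA : col {x, v (2*c), v (2*c+1)} with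
      | false =>
        exact hcfg x y hxw hyw hxy (2*c) (2*c+1) (2*c+2) c (by omega) hA (by rw [← h]; exact hA)
      | true =>
        exact hmax' (R1 col p c v hP (by omega) x y hxy (hW x hxw) (hW y hyw) hA
          (by rw [← h]; exact hA))
    have hA12 : col {x₁, v (2*c), v (2*c+1)} = col {x₂, v (2*c), v (2*c+1)} :=
      bool1 _ _ _ (hAB x₁ x₃ m1 m3 h13) (hAB x₂ x₃ m2 m3 h23)
    cases hα : col {x₁, v (2*c), v (2*c+1)} with
    | true =>
      have hA2 : col {x₂, v (2*c), v (2*c+1)} = true := by rw [← hA12]; exact hα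
      have hB1 : col {v (2*c+1), v (2*c+2), x₁} = false := by
        cases hb : col {v (2*c+1), v (2*c+2), x₁} with
        | false => rfl
        | true => exact (hAB x₂ x₁ m2 m1 h12.symm (hA2.trans hb.symm)).elim
      have hPx2 : col {v (2*c+1), v (2*c+3), x₂} = true := by
        cases hb : col {v (2*c+1), v (2*c+3), x₂} with
        | true => rfl
        | false =>
          refine (hcfg x₁ x₂ m1 m2 h12 (2*c+2) (2*c+1) (2*c+3) c (by omega) ?_ hb).elim
          rw [show ({x₁, v (2*c+2), v (2*c+1)} : Finset (Fin n))
              = {v (2*c+1), v (2*c+2), x₁} from by ext z; simp; tauto]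
          exact hB1
      exact hmax' (R2 col p c v hP (by omega) x₁ x₂ h12 (hW x₁ m1) (hW x₂ m2) hα hPx2)
    | false =>
      have hA2 : col {x₂, v (2*c), v (2*c+1)} = false := by rw [← hA12]; exact hα
      have hB2 : col {v (2*c+1), v (2*c+2), x₂} = true := by
        cases hb : col {v (2*c+1), v (2*c+2), x₂} with
        | true => rfl
        | false =>
          exact (hcfg x₁ x₂ m1 m2 h12 (2*c) (2*c+1) (2*c+2) c (by omega) hα hb).elim
      have hCD : ∀ x y, x ∈ ({x₁, x₂, x₃} : Finset (Fin n)) →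
          y ∈ ({x₁, x₂, x₃} : Finset (Fin n)) → x ≠ y →
          col {x, v (2*c+2), v (2*c+3)} ≠ col {v (2*c+3), v (2*c+4), y} := by
        intro x y hxw hyw hxy h
        cases hC : col {x, v (2*c+2), v (2*c+3)} with
        | false =>
          exact hcfg x y hxw hyw hxy (2*c+2) (2*c+3) (2*c+4) c (by omega) hC
            (by rw [← h]; exact hC)
        | true =>
          refine hmax' (R1 col p (c+1) v hP (by omega) x y hxy (hW x hxw) (hW y hyw) ?_ ?_)
          · rw [show 2*(c+1)+1 = 2*c+3 from by omega, show 2*(c+1) = 2*c+2 from by omega]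
            exact hC
          · rw [show 2*(c+1)+2 = 2*c+4 from by omega, show 2*(c+1)+1 = 2*c+3 from by omega]
            rw [← h]; exact hC
      have hC12 : col {x₁, v (2*c+2), v (2*c+3)} = col {x₂, v (2*c+2), v (2*c+3)} :=
        bool1 _ _ _ (hCD x₁ x₃ m1 m3 h13) (hCD x₂ x₃ m2 m3 h23)
      cases hγ : col {x₁, v (2*c+2), v (2*c+3)} with
      | true =>
        have hC2 : col {x₂, v (2*c+2), v (2*c+3)} = true := by rw [← hC12]; exact hγ
        have hD1 : col {v (2*c+3), v (2*c+4), x₁} = false := by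
          cases hb : col {v (2*c+3), v (2*c+4), x₁} with
          | false => rfl
          | true => exact (hCD x₂ x₁ m2 m1 h12.symm (hC2.trans hb.symm)).elim
        have hF1 : col {v (2*c), v (2*c+3), x₁} = true := by
          cases hb : col {v (2*c), v (2*c+3), x₁} with
          | true => rfl
          | false =>
            refine (hcfg x₂ x₁ m2 m1 h12.symm (2*c+1) (2*c) (2*c+3) c (by omega) ?_ hb).elim
            rw [show ({x₂, v (2*c+1), v (2*c)} : Finset (Fin n))
                = {x₂, v (2*c), v (2*c+1)} from by ext z; simp; tauto]
            exact hA2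
        have hP2 : col {v (2*c+3), v (2*c+1), x₂} = true := by
          cases hb : col {v (2*c+3), v (2*c+1), x₂} with
          | true => rfl
          | false =>
            refine (hcfg x₁ x₂ m1 m2 h12 (2*c+4) (2*c+3) (2*c+1) c (by omega) ?_ hb).elim
            rw [show ({x₁, v (2*c+4), v (2*c+3)} : Finset (Fin n))
                = {v (2*c+3), v (2*c+4), x₁} from by ext z; simp; tauto]
            exact hD1
        have hH2 : col {v (2*c+4), v (2*c+2), x₂} = true := by
          cases hb : col {v (2*c+4), v (2*c+2), x₂} with
          | true => rfl
          | false =>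
            refine (hcfg x₁ x₂ m1 m2 h12 (2*c+3) (2*c+4) (2*c+2) c (by omega) ?_ hb).elim
            rw [show ({x₁, v (2*c+3), v (2*c+4)} : Finset (Fin n))
                = {v (2*c+3), v (2*c+4), x₁} from by ext z; simp; tauto]
            exact hD1
        exact hmax' (R3 col p c v hP (by omega) x₁ x₂ h12 (hW x₁ m1) (hW x₂ m2) hF1 hP2 hH2)
      | false =>
        have hD2 : col {v (2*c+3), v (2*c+4), x₂} = true := by
          cases hb : col {v (2*c+3), v (2*c+4), x₂} with
          | true => rfl
          | false =>
            exact (hcfg x₁ x₂ m1 m2 h12 (2*c+2) (2*c+3) (2*c+4) c (by omega) hγ hb).elim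
        have hE1 : col {v (2*c), v (2*c+2), x₁} = true := by
          cases hb : col {v (2*c), v (2*c+2), x₁} with
          | true => rfl
          | false =>
            refine (hcfg x₂ x₁ m2 m1 h12.symm (2*c+1) (2*c) (2*c+2) c (by omega) ?_ hb).elim
            rw [show ({x₂, v (2*c+1), v (2*c)} : Finset (Fin n))
                = {x₂, v (2*c), v (2*c+1)} from by ext z; simp; tauto]
            exact hA2
        exact hmax' (R4 col p c v hP (by omega) x₁ x₂ h12 (hW x₁ m1) (hW x₂ m2) hE1 hB2 hD2)
  · -- a = 2*c + 1 (odd)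
    subst hc
    have hAB : ∀ x y, x ∈ ({x₁, x₂, x₃} : Finset (Fin n)) →
        y ∈ ({x₁, x₂, x₃} : Finset (Fin n)) → x ≠ y →
        col {x, v (2*c+2), v (2*c+3)} ≠ col {v (2*c+3), v (2*c+4), y} := by
      intro x y hxw hyw hxy h
      cases hA : col {x, v (2*c+2), v (2*c+3)} with
      | false =>
        exact hcfg x y hxw hyw hxy (2*c+2) (2*c+3) (2*c+4) (c+1) (by omega) hA
          (by rw [← h]; exact hA)
      | true =>
        refine hmax' (R1 col p (c+1) v hP (by omega) x y hxy (hW x hxw) (hW y hyw) ?_ ?_)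
        · rw [show 2*(c+1)+1 = 2*c+3 from by omega, show 2*(c+1) = 2*c+2 from by omega]
          exact hA
        · rw [show 2*(c+1)+2 = 2*c+4 from by omega, show 2*(c+1)+1 = 2*c+3 from by omega]
          rw [← h]; exact hA
    have hA12 : col {x₁, v (2*c+2), v (2*c+3)} = col {x₂, v (2*c+2), v (2*c+3)} :=
      bool1 _ _ _ (hAB x₁ x₃ m1 m3 h13) (hAB x₂ x₃ m2 m3 h23)
    cases hα : col {x₁, v (2*c+2), v (2*c+3)} with
    | true =>
      have hA2 : col {x₂, v (2*c+2), v (2*c+3)} = true := by rw [← hA12]; exact hα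
      have hB1 : col {v (2*c+3), v (2*c+4), x₁} = false := by
        cases hb : col {v (2*c+3), v (2*c+4), x₁} with
        | false => rfl
        | true => exact (hAB x₂ x₁ m2 m1 h12.symm (hA2.trans hb.symm)).elim
      have hPx2 : col {v (2*c+3), v (2*c+5), x₂} = true := by
        cases hb : col {v (2*c+3), v (2*c+5), x₂} with
        | true => rfl
        | false =>
          refine (hcfg x₁ x₂ m1 m2 h12 (2*c+4) (2*c+3) (2*c+5) (c+1) (by omega) ?_ hb).elim
          rw [show ({x₁, v (2*c+4), v (2*c+3)} : Finset (Fin n))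
              = {v (2*c+3), v (2*c+4), x₁} from by ext z; simp; tauto]
          exact hB1
      refine hmax' (R2 col p (c+1) v hP (by omega) x₁ x₂ h12 (hW x₁ m1) (hW x₂ m2) ?_ ?_)
      · rw [show 2*(c+1)+1 = 2*c+3 from by omega, show 2*(c+1) = 2*c+2 from by omega]
        exact hα
      · rw [show 2*(c+1)+3 = 2*c+5 from by omega, show 2*(c+1)+1 = 2*c+3 from by omega]
        exact hPx2
    | false =>
      have hA2 : col {x₂, v (2*c+2), v (2*c+3)} = false := by rw [← hA12]; exact hα
      have hP'1 : col {v (2*c+3), v (2*c+1), x₁} = true := by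
        cases hb : col {v (2*c+3), v (2*c+1), x₁} with
        | true => rfl
        | false =>
          exact (hcfg x₂ x₁ m2 m1 h12.symm (2*c+2) (2*c+3) (2*c+1) c (by omega) hA2 hb).elim
      have hPx2 : col {v (2*c+3), v (2*c+5), x₂} = true := by
        cases hb : col {v (2*c+3), v (2*c+5), x₂} with
        | true => rfl
        | false =>
          exact (hcfg x₁ x₂ m1 m2 h12 (2*c+2) (2*c+3) (2*c+5) (c+1) (by omega) hα hb).elim
      exact hmax' (R5 col p c v hP (by omega) x₁ x₂ h12 (hW x₁ m1) (hW x₂ m2) hP'1 hPx2)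
end
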